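/- arXiv:2402.13934 — 3 statements merged into one kernel-verified Lean document; each statement's English description precedes it below -/
import Mathlib

section
/- Let m ≥ 1 be an integer and let S ⊆ [m²] be a nonempty index set of size s = |S|. Suppose nonnegative weights a_j for j ∈ [m²] are given by a_j = w₁ / ((m² - s)·w₀ + s·w₁) for j ∈ S and a_j = w₀ / ((m² - s)·w₀ + s·w₁) for j ∉ S, where w₁ = 1 + (m-1)·exp(-μ) and w₀ = 2·exp(-μ) + (m-2)·exp(-2μ) for some μ > 0. Then the total weight on indices outside S satisfies Σ_{j∉S} a_j ≤ m³·exp(-μ). -/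
open Finset Real

theorem offS_weight_bound (m : ℕ) (hm : 2 ≤ m) (S : Finset ℕ)
    (hS : S ⊆ Finset.Icc 1 (m ^ 2)) (hSne : S.Nonempty) (μ : ℝ) (hμ : 0 < μ)
    (w₀ w₁ Z : ℝ) (a : ℕ → ℝ)
    (hw₁ : w₁ = 1 + ((m : ℝ) - 1) * Real.exp (-μ))
    (hw₀ : w₀ = 2 * Real.exp (-μ) + ((m : ℝ) - 2) * Real.exp (-2 * μ))
    (hZ : Z = ((m ^ 2 : ℕ) - (S.card : ℝ)) * w₀ + (S.card : ℝ) * w₁)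
    (haS : ∀ j ∈ S, a j = w₁ / Z)
    (haS' : ∀ j ∈ Finset.Icc 1 (m ^ 2) \ S, a j = w₀ / Z) :
    ∑ j ∈ Finset.Icc 1 (m ^ 2) \ S, a j ≤ (m : ℝ) ^ 3 * Real.exp (-μ) := by
  set e := Real.exp (-μ) with he
  have hepos : 0 < e := Real.exp_pos _
  have he1 : e < 1 := by
    rw [he]
    exact Real.exp_lt_one_iff.mpr (by linarith)
  have he2 : Real.exp (-2 * μ) ≤ e := by
    rw [he]
    exact Real.exp_le_exp.mpr (by linarith)
  have hm1 : (1 : ℝ) ≤ (m : ℝ) := by exact_mod_cast Nat.one_le_of_lt hm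
  have hm2 : (2 : ℝ) ≤ (m : ℝ) := by exact_mod_cast hm
  have hw₀0 : 0 ≤ w₀ := by
    rw [hw₀]
    have := (Real.exp_pos (-2 * μ)).le
    nlinarith
  have hw₀le : w₀ ≤ (m : ℝ) * e := by
    rw [hw₀]
    have := (Real.exp_pos (-2 * μ)).le
    nlinarith
  have hw₁1 : 1 ≤ w₁ := by rw [hw₁]; nlinarith
  have hcardle : (S.card : ℝ) ≤ ((m ^ 2 : ℕ) : ℝ) := by
    have := Finset.card_le_card hS
    simp only [Nat.card_Icc] at this
    exact_mod_cast this.trans (by omega)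
  have hcard1 : (1 : ℝ) ≤ (S.card : ℝ) := by
    exact_mod_cast Finset.card_pos.mpr hSne
  have hZ1 : 1 ≤ Z := by
    rw [hZ]
    nlinarith
  have hZpos : 0 < Z := lt_of_lt_of_le one_pos hZ1
  have hsum : ∑ j ∈ Finset.Icc 1 (m ^ 2) \ S, a j
      = ((Finset.Icc 1 (m ^ 2) \ S).card : ℝ) * (w₀ / Z) := by
    rw [Finset.sum_congr rfl haS', Finset.sum_const, nsmul_eq_mul]
  rw [hsum]
  have hdiffcard : ((Finset.Icc 1 (m ^ 2) \ S).card : ℝ) ≤ ((m ^ 2 : ℕ) : ℝ) := by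
    exact_mod_cast Finset.card_le_card (Finset.sdiff_subset.trans (subset_refl _)) |>.trans
      (by simp)
  have hdiv : w₀ / Z ≤ w₀ := by
    rw [div_le_iff₀ hZpos]
    nlinarith
  have h1 : ((Finset.Icc 1 (m ^ 2) \ S).card : ℝ) * (w₀ / Z)
      ≤ ((m ^ 2 : ℕ) : ℝ) * w₀ := by
    have hdz : 0 ≤ w₀ / Z := div_nonneg hw₀0 hZpos.le
    have hdc : (0:ℝ) ≤ ((Finset.Icc 1 (m ^ 2) \ S).card : ℝ) := by positivity
    exact mul_le_mul hdiffcard hdiv hdz (by positivity)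
  refine h1.trans ?_
  have : ((m ^ 2 : ℕ) : ℝ) = (m : ℝ) ^ 2 := by push_cast; ring
  rw [this]
  calc (m:ℝ)^2 * w₀ ≤ (m:ℝ)^2 * ((m:ℝ) * e) := by nlinarith
    _ = (m:ℝ)^3 * e := by ring
end

section
/- With the same setup of weights a_j as above (w₁ = 1 + (m-1)exp(-μ) on S and w₀ = 2exp(-μ) + (m-2)exp(-2μ) off S, normalized to sum to 1), for every j ∈ S the deviation from uniform averaging on S satisfies |a_j - 1/|S|| ≤ m³·exp(-μ)/|S|. -/
open Finset Real

theorem onS_weight_deviation (m : ℕ) (hm : 2 ≤ m) (S : Finset ℕ)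
    (hS : S ⊆ Finset.Icc 1 (m ^ 2)) (hSne : S.Nonempty) (μ : ℝ) (hμ : 0 < μ)
    (w₀ w₁ Z : ℝ) (a : ℕ → ℝ)
    (hw₁ : w₁ = 1 + ((m : ℝ) - 1) * Real.exp (-μ))
    (hw₀ : w₀ = 2 * Real.exp (-μ) + ((m : ℝ) - 2) * Real.exp (-2 * μ))
    (hZ : Z = ((m ^ 2 : ℕ) - (S.card : ℝ)) * w₀ + (S.card : ℝ) * w₁)
    (haS : ∀ j ∈ S, a j = w₁ / Z)
    (haS' : ∀ j ∈ Finset.Icc 1 (m ^ 2) \ S, a j = w₀ / Z) :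
    ∀ j ∈ S, |a j - 1 / (S.card : ℝ)| ≤ (m : ℝ) ^ 3 * Real.exp (-μ) / (S.card : ℝ) := by
  intro j hj
  have hm' : (2:ℝ) ≤ (m:ℝ) := by exact_mod_cast hm
  have hE : 0 < Real.exp (-μ) := Real.exp_pos _
  have hE2 : Real.exp (-2*μ) ≤ Real.exp (-μ) := by
    apply Real.exp_le_exp.2; linarith
  have hE2' : 0 < Real.exp (-2*μ) := Real.exp_pos _
  have hw0 : 0 ≤ w₀ := by rw [hw₀]; nlinarith
  have hw1 : 1 ≤ w₁ := by rw [hw₁]; nlinarith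
  have hs : 1 ≤ (S.card : ℝ) := by
    exact_mod_cast Finset.card_pos.mpr hSne
  have hsn : (S.card : ℝ) ≤ ((m^2 : ℕ) : ℝ) := by
    exact_mod_cast (Finset.card_le_card hS).trans_eq (by simp)
  have hZ1 : 1 ≤ Z := by rw [hZ]; nlinarith
  have hZpos : 0 < Z := by linarith
  rw [haS j hj]
  have hdev : w₁ / Z - 1 / (S.card : ℝ)
      = -((((m^2:ℕ) : ℝ) - S.card) * w₀) / ((S.card : ℝ) * Z) := by
    have hsne : (S.card:ℝ) ≠ 0 := by linarith
    rw [div_sub_div _ _ hZpos.ne' hsne, hZ]; ring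
  rw [hdev, abs_div, abs_neg,
    abs_of_nonneg (by nlinarith : (0:ℝ) ≤ (((m^2:ℕ):ℝ) - S.card) * w₀),
    abs_of_pos (by positivity : (0:ℝ) < (S.card:ℝ) * Z)]
  have hnum : (((m^2:ℕ):ℝ) - S.card) * w₀ ≤ (m:ℝ)^3 * Real.exp (-μ) := by
    have hw0ub : w₀ ≤ (m:ℝ) * Real.exp (-μ) := by rw [hw₀]; nlinarith
    have hcast : ((m^2:ℕ):ℝ) = (m:ℝ)^2 := by push_cast; ring
    nlinarith [hcast, hE.le]
  exact div_le_div₀ (by positivity) hnum (by linarith) (by nlinarith)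
end

section
/- With the sparse attention pattern I_i = {j ≤ i : i - kB < j} ∪ {j ≤ i : (j-1) mod B ≥ B - c} and fixed constants k, c ≥ 1, choosing B = ⌈√L⌉ yields Σ_{i=1}^{L} |I_i| = O(L√L). -/
/-!
Split `I_i` into the sliding window `i - kB < j ≤ i`, of size at most `kB`, and the positions
`j ≤ L` whose offset `(j - 1) mod B` lies among the last `c` residues, at most `c` per block of
`B` consecutive positions. Once `L ≤ B²` there are at most `B` blocks, so `|I_i| ≤ (k + c) B`,
and `B = ⌈√L⌉ ≤ 2√L`.
-/

open Finset

/-- The attention set `I_i`, positions being numbered from `1`. -/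
def sparseAttentionSet (k c B i : ℕ) : Finset ℕ :=
  (Icc 1 i).filter (fun j => i - k * B < j ∨ B - c ≤ (j - 1) % B)

theorem card_filter_sub_lt_le (i m : ℕ) : ((Icc 1 i).filter (fun j => i - m < j)).card ≤ m :=
  calc ((Icc 1 i).filter (fun j => i - m < j)).card
      ≤ (Icc (i - m + 1) i).card := card_le_card fun j hj => by simp at hj ⊢; omega
    _ ≤ m := by rw [Nat.card_Icc]; omega

/-- Injectivity of `n ↦ (n / B, n % B)` puts these positions into a product of at most
`(L - 1) / B + 1` blocks with `c` residues each. -/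
theorem card_filter_sub_le_mod_le (L B c : ℕ) (hB : 0 < B) :
    ((Icc 1 L).filter (fun j => B - c ≤ (j - 1) % B)).card ≤ c * ((L - 1) / B + 1) :=
  calc ((Icc 1 L).filter (fun j => B - c ≤ (j - 1) % B)).card
      ≤ (range ((L - 1) / B + 1) ×ˢ Ico (B - c) B).card := by
        refine card_le_card_of_injOn (fun j => ((j - 1) / B, (j - 1) % B)) ?_ ?_
        · intro j hj
          simp only [coe_filter, mem_Icc, Set.mem_ofPred_eq] at hj
          simp only [coe_product, coe_range, coe_Ico, Set.mem_prod, Set.mem_Iio, Set.mem_Ico]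
          exact ⟨Nat.lt_succ_of_le (Nat.div_le_div_right (by omega)), hj.2, Nat.mod_lt _ hB⟩
        · intro j₁ hj₁ j₂ hj₂ h
          simp only [coe_filter, mem_Icc, Set.mem_ofPred_eq, Prod.mk.injEq] at hj₁ hj₂ h
          have := Nat.div_add_mod (j₁ - 1) B
          have := Nat.div_add_mod (j₂ - 1) B
          rw [h.1, h.2] at *
          omega
    _ ≤ c * ((L - 1) / B + 1) := by
        rw [card_product, card_range, Nat.card_Ico, mul_comm]
        exact Nat.mul_le_mul_right _ (by omega)

theorem sub_one_div_add_one_le {L B : ℕ} (hB : 0 < B) (hL : L ≤ B * B) : (L - 1) / B + 1 ≤ B :=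
  Nat.div_lt_of_lt_mul (by have := Nat.mul_pos hB hB; omega)

theorem card_sparseAttentionSet_le {k c B i L : ℕ} (hB : 0 < B) (hL : L ≤ B * B) (hi : i ≤ L) :
    (sparseAttentionSet k c B i).card ≤ (k + c) * B :=
  calc (sparseAttentionSet k c B i).card
      ≤ ((Icc 1 i).filter (fun j => i - k * B < j)).card +
          ((Icc 1 L).filter (fun j => B - c ≤ (j - 1) % B)).card := by
        rw [sparseAttentionSet, filter_or]
        refine (card_union_le _ _).trans (Nat.add_le_add_left (card_le_card ?_) _)
        exact filter_subset_filter _ (Icc_subset_Icc_right hi)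
    _ ≤ k * B + c * B :=
        Nat.add_le_add (card_filter_sub_lt_le i _)
          ((card_filter_sub_le_mod_le L B c hB).trans
            (Nat.mul_le_mul_left c (sub_one_div_add_one_le hB hL)))
    _ = (k + c) * B := (add_mul k c B).symm

theorem sum_card_sparseAttentionSet_le {k c B L : ℕ} (hB : 0 < B) (hL : L ≤ B * B) :
    ∑ i ∈ Icc 1 L, (sparseAttentionSet k c B i).card ≤ L * ((k + c) * B) := by
  simpa using sum_le_card_nsmul (Icc 1 L) _ _ fun i hi =>
    card_sparseAttentionSet_le (k := k) (c := c) hB hL (mem_Icc.1 hi).2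

theorem le_ceil_sqrt_mul_ceil_sqrt (L : ℕ) : L ≤ ⌈Real.sqrt L⌉₊ * ⌈Real.sqrt L⌉₊ := by
  have : (L : ℝ) ≤ ⌈Real.sqrt L⌉₊ * ⌈Real.sqrt L⌉₊ :=
    (Real.mul_self_sqrt (Nat.cast_nonneg L)).symm.trans_le
      (mul_self_le_mul_self (Real.sqrt_nonneg _) (Nat.le_ceil _))
  exact_mod_cast this

theorem ceil_sqrt_le_two_mul_sqrt {x : ℝ} (hx : 1 ≤ x) : (⌈Real.sqrt x⌉₊ : ℝ) ≤ 2 * Real.sqrt x :=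
  (Nat.ceil_lt_two_mul (by linarith [Real.one_le_sqrt.2 hx])).le

theorem sparse_attention_cost_sqrt_general (k c : ℕ) (hk : 0 < k) :
    ∃ C : ℝ, 0 < C ∧ ∀ L : ℕ, 1 ≤ L →
      ∀ B : ℕ, B = ⌈Real.sqrt L⌉₊ →
        ((∑ i ∈ Finset.Icc 1 L,
            ((Finset.Icc 1 i).filter
                (fun j => i - k * B < j ∨ B - c ≤ (j - 1) % B)).card : ℕ) : ℝ) ≤
          C * (L : ℝ) * Real.sqrt L := by
  refine ⟨2 * (k + c), by positivity, fun L hL B hB => ?_⟩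
  have hB0 : 0 < B := hB ▸ Nat.ceil_pos.2 (Real.sqrt_pos.2 (by exact_mod_cast hL))
  have hsum := sum_card_sparseAttentionSet_le (k := k) (c := c) hB0
    (hB ▸ le_ceil_sqrt_mul_ceil_sqrt L)
  have hB2 : (B : ℝ) ≤ 2 * Real.sqrt L := hB ▸ ceil_sqrt_le_two_mul_sqrt (by exact_mod_cast hL)
  calc ((∑ i ∈ Icc 1 L, (sparseAttentionSet k c B i).card : ℕ) : ℝ)
      ≤ L * ((k + c) * B) := by exact_mod_cast hsum
    _ ≤ L * ((k + c) * (2 * Real.sqrt L)) := by gcongr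
    _ = 2 * (k + c) * L * Real.sqrt L := by ring

theorem sparse_attention_cost_sqrt (k c : ℕ) (hk : 0 < k) (hc : 0 < c) :
    ∃ C : ℝ, 0 < C ∧ ∀ L : ℕ, 1 ≤ L →
      ∀ B : ℕ, B = ⌈Real.sqrt L⌉₊ →
        ((∑ i ∈ Finset.Icc 1 L,
            ((Finset.Icc 1 i).filter
                (fun j => i - k * B < j ∨ B - c ≤ (j - 1) % B)).card : ℕ) : ℝ) ≤
          C * (L : ℝ) * Real.sqrt L :=
  sparse_attention_cost_sqrt_general k c hk
end
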